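/- arXiv:1005.4648 — 2 statements merged into one kernel-verified Lean document; each statement's English description precedes it below -/
import Mathlib

section
/- Suppose f, g: ℂ → ℂ are real-differentiable, f satisfies the Beltrami equation f_z̄ = μ_f f_z with f_z ≠ 0, and g satisfies g_z̄ = μ_g g_z. Then the composition g ∘ f satisfies (g∘f)_z̄ = μ (g∘f)_z where μ = (μ_f + (μ_g∘f)·τ)/(1 + conj(μ_f)·(μ_g∘f)·τ) and τ = conj(f_z)/f_z, provided the denominator is nonzero. -/
/-!
Write `a = f_z(z)`, `τ = conj a / a` and `A = g_z(f z)`. Substituting both Beltrami equations into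
the chain rule, and using `conj a = τ a`, gives `(g∘f)_z̄ = A a (μ_f + (μ_g∘f) τ)` and
`(g∘f)_z = A a (1 + conj μ_f (μ_g∘f) τ)`; the coefficient is their quotient.
-/

noncomputable def Wz (f : ℂ → ℂ) (z : ℂ) : ℂ :=
  (fderiv ℝ f z 1 - Complex.I * fderiv ℝ f z Complex.I) / 2

noncomputable def Wzbar (f : ℂ → ℂ) (z : ℂ) : ℂ :=
  (fderiv ℝ f z 1 + Complex.I * fderiv ℝ f z Complex.I) / 2

open ComplexConjugate

theorem ContinuousLinearMap.complex_apply_eq_mul_add_mul_conj (L : ℂ →L[ℝ] ℂ) (v : ℂ) :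
    L v = (L 1 - Complex.I * L Complex.I) / 2 * v
      + (L 1 + Complex.I * L Complex.I) / 2 * conj v := by
  conv_lhs => rw [← Complex.re_add_im v, ← mul_one (v.re : ℂ)]
  simp only [← Complex.real_smul, map_add, map_smul]
  apply Complex.ext <;> simp <;> ring

theorem fderiv_apply_eq_Wz_mul_add_Wzbar_mul (f : ℂ → ℂ) (z v : ℂ) :
    fderiv ℝ f z v = Wz f z * v + Wzbar f z * conj v :=
  (fderiv ℝ f z).complex_apply_eq_mul_add_mul_conj v

section ChainRule

variable {f g : ℂ → ℂ} {z : ℂ}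

theorem Wz_comp (hg : DifferentiableAt ℝ g (f z)) (hf : DifferentiableAt ℝ f z) :
    Wz (g ∘ f) z = Wz g (f z) * Wz f z + Wzbar g (f z) * conj (Wzbar f z) := by
  rw [Wz, fderiv_comp z hg hf]
  simp only [ContinuousLinearMap.comp_apply, fderiv_apply_eq_Wz_mul_add_Wzbar_mul,
    map_add, map_mul, map_neg, map_one, Complex.conj_I]
  linear_combination -(Wz g (f z) * Wz f z - Wz g (f z) * Wzbar f z
    - Wzbar g (f z) * conj (Wz f z) + Wzbar g (f z) * conj (Wzbar f z)) / 2 * Complex.I_mul_I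

theorem Wzbar_comp (hg : DifferentiableAt ℝ g (f z)) (hf : DifferentiableAt ℝ f z) :
    Wzbar (g ∘ f) z = Wz g (f z) * Wzbar f z + Wzbar g (f z) * conj (Wz f z) := by
  rw [Wzbar, fderiv_comp z hg hf]
  simp only [ContinuousLinearMap.comp_apply, fderiv_apply_eq_Wz_mul_add_Wzbar_mul,
    map_add, map_mul, map_neg, map_one, Complex.conj_I]
  linear_combination (Wz g (f z) * Wz f z - Wz g (f z) * Wzbar f z
    - Wzbar g (f z) * conj (Wz f z) + Wzbar g (f z) * conj (Wzbar f z)) / 2 * Complex.I_mul_I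

end ChainRule

theorem beltrami_composition_general
    (f g : ℂ → ℂ) (μf μg : ℂ → ℂ)
    (hf : Differentiable ℝ f) (hg : Differentiable ℝ g)
    (hbf : ∀ z, Wzbar f z = μf z * Wz f z)
    (hbg : ∀ w, Wzbar g w = μg w * Wz g w)
    (z : ℂ)
    (hden : 1 + (starRingEnd ℂ (μf z)) * μg (f z) * (starRingEnd ℂ (Wz f z) / Wz f z) ≠ 0) :
    Wzbar (g ∘ f) z =
      ((μf z + μg (f z) * (starRingEnd ℂ (Wz f z) / Wz f z)) /
        (1 + (starRingEnd ℂ (μf z)) * μg (f z) * (starRingEnd ℂ (Wz f z) / Wz f z))) *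
        Wz (g ∘ f) z := by
  set a := Wz f z
  set τ := conj a / a
  have hconj : conj a = τ * a :=
    (div_mul_cancel_of_imp fun ha => by rw [ha, map_zero]).symm
  have hWzbar : Wzbar (g ∘ f) z = Wz g (f z) * a * (μf z + μg (f z) * τ) := by
    rw [Wzbar_comp (hg (f z)) (hf z), hbf, hbg, hconj]
    ring
  have hWz : Wz (g ∘ f) z = Wz g (f z) * a * (1 + conj (μf z) * μg (f z) * τ) := by
    rw [Wz_comp (hg (f z)) (hf z), hbf, hbg, map_mul, hconj]
    ring
  rw [hWzbar, hWz, div_mul_eq_mul_div, eq_div_iff hden]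
  ring

/-- Composition formula for Beltrami coefficients:
if `f_z̄ = μ_f f_z` with `f_z ≠ 0` and `g_z̄ = μ_g g_z`, then `g ∘ f` satisfies the
Beltrami equation with coefficient `(μ_f + (μ_g∘f) τ)/(1 + conj(μ_f) (μ_g∘f) τ)`,
`τ = conj(f_z)/f_z`, provided the denominator is nonzero. -/
theorem beltrami_composition
    (f g : ℂ → ℂ) (μf μg : ℂ → ℂ)
    (hf : Differentiable ℝ f) (hg : Differentiable ℝ g)
    (hbf : ∀ z, Wzbar f z = μf z * Wz f z)
    (hfz : ∀ z, Wz f z ≠ 0)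
    (hbg : ∀ w, Wzbar g w = μg w * Wz g w)
    (z : ℂ)
    (hden : 1 + (starRingEnd ℂ (μf z)) * μg (f z) * (starRingEnd ℂ (Wz f z) / Wz f z) ≠ 0) :
    Wzbar (g ∘ f) z =
      ((μf z + μg (f z) * (starRingEnd ℂ (Wz f z) / Wz f z)) /
        (1 + (starRingEnd ℂ (μf z)) * μg (f z) * (starRingEnd ℂ (Wz f z) / Wz f z))) *
        Wz (g ∘ f) z :=
  beltrami_composition_general f g μf μg hf hg hbf hbg z hden
end

section
/- In the Euclidean discrete conformal deformation of a triangle, the 3×3 matrix H with entries H_{ab} = -∂θ_a/∂u_b is symmetric, has all row sums equal to zero, and is positive semidefinite; moreover it is positive definite on the subspace {(w_1,w_2,w_3) : w_1 + w_2 + w_3 = 0}. -/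
open Real Matrix

/-!
In the differences `x = w 1 - w 2`, `y = w 2 - w 0`, `z = w 0 - w 1` (so `x + y + z = 0`) the
quadratic form of `H` is `cot θ₀ x² + cot θ₁ y² + cot θ₂ z²`. Eliminating `z`, this is a binary
form whose leading coefficient `cot θ₁ + cot θ₂ = sin θ₀ / (sin θ₁ sin θ₂)` is positive and whose
discriminant is governed by `cot θ₀ cot θ₁ + cot θ₁ cot θ₂ + cot θ₂ cot θ₀ = 1`; completing the
square shows it is positive definite.
-/

namespace Real

theorem cot_add_cot {A B : ℝ} (hA : sin A ≠ 0) (hB : sin B ≠ 0) :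
    cot A + cot B = sin (A + B) / (sin A * sin B) := by
  rw [cot_eq_cos_div_sin, cot_eq_cos_div_sin, sin_add]
  field_simp
  ring

theorem cot_add_cot_pos {A B : ℝ} (hA : 0 < A) (hB : 0 < B) (hAB : A + B < π) :
    0 < cot A + cot B := by
  have hsA := sin_pos_of_pos_of_lt_pi hA (by linarith)
  have hsB := sin_pos_of_pos_of_lt_pi hB (by linarith)
  have hsAB := sin_pos_of_pos_of_lt_pi (add_pos hA hB) hAB
  rw [cot_add_cot hsA.ne' hsB.ne']
  positivity

theorem cot_mul_cot_add_cot_mul_cot_add_cot_mul_cot {A B C : ℝ} (hA : sin A ≠ 0)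
    (hB : sin B ≠ 0) (hC : sin C ≠ 0) (h : A + B + C = π) :
    cot A * cot B + cot B * cot C + cot C * cot A = 1 := by
  have hC' : C = π - (A + B) := by linarith
  have hsinC : sin C = sin A * cos B + cos A * sin B := by rw [hC', sin_pi_sub, sin_add]
  have hcosC : cos C = sin A * sin B - cos A * cos B := by
    rw [hC', cos_pi_sub, cos_add]; ring
  simp only [cot_eq_cos_div_sin]
  field_simp
  rw [hsinC, hcosC]
  ring

end Real

section WeightedSquares

variable {c₀ c₁ c₂ x y z : ℝ}

theorem mul_weighted_sq_eq_of_sum_eq_zero (hxyz : x + y + z = 0) :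
    (c₁ + c₂) * (c₀ * x ^ 2 + c₁ * y ^ 2 + c₂ * z ^ 2) =
      (c₁ * y - c₂ * z) ^ 2 + (c₀ * c₁ + c₁ * c₂ + c₂ * c₀) * x ^ 2 := by
  obtain rfl : x = -(y + z) := by linarith
  ring

theorem weighted_sq_nonneg_of_sum_eq_zero (hxyz : x + y + z = 0) (h₁₂ : 0 < c₁ + c₂)
    (hσ : 0 ≤ c₀ * c₁ + c₁ * c₂ + c₂ * c₀) :
    0 ≤ c₀ * x ^ 2 + c₁ * y ^ 2 + c₂ * z ^ 2 := by
  refine nonneg_of_mul_nonneg_right ?_ h₁₂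
  rw [mul_weighted_sq_eq_of_sum_eq_zero hxyz]
  positivity

theorem weighted_sq_pos_of_sum_eq_zero (hxyz : x + y + z = 0) (h₁₂ : 0 < c₁ + c₂)
    (hσ : 0 < c₀ * c₁ + c₁ * c₂ + c₂ * c₀) (hxy : x ≠ 0 ∨ y ≠ 0) :
    0 < c₀ * x ^ 2 + c₁ * y ^ 2 + c₂ * z ^ 2 := by
  refine pos_of_mul_pos_right ?_ h₁₂.le
  rw [mul_weighted_sq_eq_of_sum_eq_zero hxyz]
  by_cases hx : x = 0
  · have hy : y ≠ 0 := hxy.resolve_left (not_not_intro hx)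
    obtain rfl : z = -y := by linarith
    have : c₁ * y - c₂ * -y ≠ 0 := by
      rw [show c₁ * y - c₂ * -y = (c₁ + c₂) * y by ring]
      exact mul_ne_zero h₁₂.ne' hy
    positivity
  · positivity

end WeightedSquares

/-- The cotangent Laplacian of a triangle: `c a` is the cotangent of the angle at vertex `a`,
which weights the opposite edge. -/
def cotanLaplacian (c : Fin 3 → ℝ) : Matrix (Fin 3) (Fin 3) ℝ :=
  !![c 1 + c 2, -c 2, -c 1; -c 2, c 0 + c 2, -c 0; -c 1, -c 0, c 0 + c 1]

namespace cotanLaplacian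

variable (c : Fin 3 → ℝ)

theorem isSymm : (cotanLaplacian c).IsSymm := by
  ext a b
  fin_cases a <;> fin_cases b <;> rfl

theorem sum_row (a : Fin 3) : ∑ b, cotanLaplacian c a b = 0 := by
  fin_cases a <;> simp [cotanLaplacian, Fin.sum_univ_three]

theorem dotProduct_mulVec (w : Fin 3 → ℝ) :
    w ⬝ᵥ cotanLaplacian c *ᵥ w =
      c 0 * (w 1 - w 2) ^ 2 + c 1 * (w 2 - w 0) ^ 2 + c 2 * (w 0 - w 1) ^ 2 := by
  simp only [dotProduct, mulVec, cotanLaplacian, of_apply, cons_val', cons_val_fin_one,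
    Fin.sum_univ_three, cons_val_zero, cons_val_one, cons_val]
  ring

variable {c}

theorem posSemidef (h₁₂ : 0 < c 1 + c 2) (hσ : 0 ≤ c 0 * c 1 + c 1 * c 2 + c 2 * c 0) :
    (cotanLaplacian c).PosSemidef := by
  refine .of_dotProduct_mulVec_nonneg (isSymm c) fun w => ?_
  rw [star_trivial, dotProduct_mulVec]
  exact weighted_sq_nonneg_of_sum_eq_zero (by ring) h₁₂ hσ

theorem dotProduct_mulVec_pos (h₁₂ : 0 < c 1 + c 2)
    (hσ : 0 < c 0 * c 1 + c 1 * c 2 + c 2 * c 0) {w : Fin 3 → ℝ} (hw : ∑ a, w a = 0)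
    (hw₀ : w ≠ 0) : 0 < w ⬝ᵥ cotanLaplacian c *ᵥ w := by
  rw [dotProduct_mulVec]
  refine weighted_sq_pos_of_sum_eq_zero (by ring) h₁₂ hσ ?_
  contrapose! hw₀
  rw [Fin.sum_univ_three] at hw
  ext a
  fin_cases a <;>
    simp only [Fin.zero_eta, Fin.mk_one, Fin.reduceFinMk, Fin.isValue, Pi.zero_apply] <;>
    linarith [hw₀.1, hw₀.2]

end cotanLaplacian

theorem eq_cotanLaplacian {θ : Fin 3 → ℝ} {H : Matrix (Fin 3) (Fin 3) ℝ}
    (hH : ∀ a b, H a b =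
      if a = b then (∑ c ∈ Finset.univ.erase a, Real.cos (θ c) / Real.sin (θ c))
      else -(Real.cos (θ (3 - a - b)) / Real.sin (θ (3 - a - b)))) :
    H = cotanLaplacian fun a => cot (θ a) := by
  ext a b
  rw [hH]
  fin_cases a <;> fin_cases b <;>
    simp [cotanLaplacian, cot_eq_cos_div_sin, Finset.sum_erase_eq_sub, Fin.sum_univ_three] <;>
    first | rfl | ring

/-- The Hessian of the discrete Yamabe energy of a single Euclidean triangle with
angles `θ 0, θ 1, θ 2` (summing to π): `H_{ab} = -cot θ_c` for `a ≠ b`,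
`H_{aa} = cot θ_b + cot θ_c`. It is symmetric, has zero row sums, is positive
semidefinite, and positive definite on `{w : w 0 + w 1 + w 2 = 0}`. -/
theorem yamabe_hessian_posdef
    (θ : Fin 3 → ℝ) (hθ : ∀ a, 0 < θ a ∧ θ a < π) (hsum : θ 0 + θ 1 + θ 2 = π)
    (H : Matrix (Fin 3) (Fin 3) ℝ)
    (hH : ∀ a b, H a b =
      if a = b then (∑ c ∈ Finset.univ.erase a, Real.cos (θ c) / Real.sin (θ c))
      else -(Real.cos (θ (3 - a - b)) / Real.sin (θ (3 - a - b)))) :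
    H.IsSymm ∧ (∀ a, ∑ b, H a b = 0) ∧ H.PosSemidef ∧
      ∀ w : Fin 3 → ℝ, (∑ a, w a = 0) → w ≠ 0 → 0 < w ⬝ᵥ H.mulVec w := by
  obtain rfl := eq_cotanLaplacian hH
  have hsin a : sin (θ a) ≠ 0 := (sin_pos_of_pos_of_lt_pi (hθ a).1 (hθ a).2).ne'
  have h₁₂ : 0 < cot (θ 1) + cot (θ 2) :=
    cot_add_cot_pos (hθ 1).1 (hθ 2).1 (by linarith [(hθ 0).1])
  have hσ : cot (θ 0) * cot (θ 1) + cot (θ 1) * cot (θ 2) + cot (θ 2) * cot (θ 0) = 1 :=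
    cot_mul_cot_add_cot_mul_cot_add_cot_mul_cot (hsin 0) (hsin 1) (hsin 2) hsum
  exact ⟨cotanLaplacian.isSymm _, cotanLaplacian.sum_row _,
    cotanLaplacian.posSemidef h₁₂ (hσ ▸ zero_le_one),
    fun w hw hw₀ => cotanLaplacian.dotProduct_mulVec_pos h₁₂ (hσ ▸ zero_lt_one) hw hw₀⟩
end
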